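/- For x ≥ 2, write x = #(n'(x)) · s'(x) with s'(x) = 1 + (p_{n'(x)+1} − 1) r'(x) and r'(x) = (x − #(n'(x)))/(#(n'(x)+1) − #(n'(x))), and define tot₊(x) = (1 + (p_{n'(x)+1} − 2) r'(x)) · ∏_{i=1}^{n'(x)} (p_i − 1). Then x/tot₊(x) is asymptotically equivalent to ∏_{i=1}^{n'(x)} p_i/(p_i − 1), i.e., lim_{x→∞} (x/tot₊(x)) / ∏_{i=1}^{n'(x)} (p_i/(p_i−1)) = 1. -/

import Mathlib

/-!
Write `x = #n · (1 + (a - 1) r)` with `n = n'(x)`, `a = p (n + 1)` and `r ∈ [0, 1)`. Since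
`∏_{i ≤ n} p_i / (p_i - 1) = #n / ∏_{i ≤ n} (p_i - 1)`, the ratio in question collapses to
`(1 + (a - 1) r) / (1 + (a - 2) r)`, which lies in `[1, a / (a - 1)]`. As `x → ∞` we have
`n'(x) → ∞`, hence `a → ∞` and `a / (a - 1) → 1`; the ratio tends to `1` by squeezing.
-/

open Filter Real Finset

/-- The n-th prime number, 1-indexed: `p 1 = 2`, `p 2 = 3`, ... -/
noncomputable def p (n : ℕ) : ℕ := Nat.nth Nat.Prime (n - 1)

/-- The n-th primorial: `primor n = ∏_{i=1}^n p i`. -/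
noncomputable def primor (n : ℕ) : ℕ := ∏ i ∈ Finset.Icc 1 n, p i

open Topology

/-- The paper's `r'(x)`, with `n` in place of `n'(x)`. -/
noncomputable def rPrime (x : ℝ) (n : ℕ) : ℝ :=
  (x - primor n) / (primor (n + 1) - primor n)

/-- The paper's `tot₊(x)`, with `n` in place of `n'(x)`. -/
noncomputable def totPlus (x : ℝ) (n : ℕ) : ℝ :=
  (1 + ((p (n + 1) : ℝ) - 2) * rPrime x n) * ∏ i ∈ Icc 1 n, ((p i : ℝ) - 1)

lemma two_le_p (i : ℕ) : 2 ≤ p i := (Nat.prime_nth_prime _).two_le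

lemma primor_pos (n : ℕ) : 0 < primor n :=
  prod_pos fun _ _ => (Nat.prime_nth_prime _).pos

lemma primor_succ (n : ℕ) : primor (n + 1) = primor n * p (n + 1) :=
  prod_Icc_succ_top (Nat.le_add_left 1 n) p

lemma primor_mono : Monotone primor := fun _ _ h =>
  prod_le_prod_of_subset_of_one_le' (Icc_subset_Icc le_rfl h)
    fun _ _ _ => (Nat.prime_nth_prime _).one_lt.le

lemma tendsto_p_succ_atTop : Tendsto (fun n => p (n + 1)) atTop atTop :=
  (Nat.nth_strictMono Nat.infinite_setOfPred_prime).tendsto_atTop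

lemma tendsto_atTop_of_lt_primor_succ {n' : ℝ → ℕ}
    (hn' : ∀ᶠ x in atTop, x < primor (n' x + 1)) : Tendsto n' atTop atTop := by
  refine tendsto_atTop.2 fun N => ?_
  filter_upwards [hn', eventually_ge_atTop (primor N : ℝ)] with x hlt hge
  by_contra! hN
  have : (primor (n' x + 1) : ℝ) ≤ primor N := by exact_mod_cast primor_mono hN
  linarith

lemma prod_div_sub_one_eq_primor_div (n : ℕ) :
    ∏ i ∈ Icc 1 n, ((p i : ℝ) / ((p i : ℝ) - 1)) =
      primor n / ∏ i ∈ Icc 1 n, ((p i : ℝ) - 1) := by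
  rw [prod_div_distrib, primor, Nat.cast_prod]

lemma rPrime_mem_Icc {x : ℝ} {n : ℕ} (h₁ : (primor n : ℝ) ≤ x)
    (h₂ : x < primor (n + 1)) :
    rPrime x n ∈ Set.Icc 0 1 := by
  have hgap : (primor n : ℝ) < primor (n + 1) := h₁.trans_lt h₂
  exact ⟨div_nonneg (by linarith) (by linarith),
    (div_le_one (by linarith)).2 (by linarith)⟩

lemma div_totPlus_div_prod_eq (x : ℝ) (n : ℕ) :
    x / totPlus x n / ∏ i ∈ Icc 1 n, ((p i : ℝ) / ((p i : ℝ) - 1)) =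
      (1 + ((p (n + 1) : ℝ) - 1) * rPrime x n) / (1 + ((p (n + 1) : ℝ) - 2) * rPrime x n) := by
  have hP : (primor n : ℝ) ≠ 0 := by exact_mod_cast (primor_pos n).ne'
  have ha : (p (n + 1) : ℝ) - 1 ≠ 0 := by
    have : (2 : ℝ) ≤ p (n + 1) := by exact_mod_cast two_le_p _
    linarith
  have hT : ∏ i ∈ Icc 1 n, ((p i : ℝ) - 1) ≠ 0 := prod_ne_zero_iff.2 fun i _ => by
    have : (2 : ℝ) ≤ p i := by exact_mod_cast two_le_p i
    linarith
  rw [prod_div_sub_one_eq_primor_div, totPlus, rPrime, primor_succ, Nat.cast_mul]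
  field_simp
  ring

lemma div_mem_Icc_div_sub_one {a r : ℝ} (ha : 1 < a) (hr : r ∈ Set.Icc 0 1) :
    (1 + (a - 1) * r) / (1 + (a - 2) * r) ∈ Set.Icc 1 (a / (a - 1)) := by
  obtain ⟨hr₀, hr₁⟩ := hr
  have hden : 0 < 1 + (a - 2) * r := by
    nlinarith [mul_nonneg hr₀ (sub_pos.2 ha).le,
      mul_nonneg (sub_nonneg.2 hr₁) (sub_pos.2 ha).le]
  refine ⟨(one_le_div hden).2 (by nlinarith), ?_⟩
  rw [div_le_div_iff₀ hden (by linarith)]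
  nlinarith

lemma tendsto_div_sub_one_atTop : Tendsto (fun a : ℝ => a / (a - 1)) atTop (𝓝 1) := by
  have h : Tendsto (fun a : ℝ => 1 + (a - 1)⁻¹) atTop (𝓝 (1 + 0)) :=
    tendsto_const_nhds.add
      (tendsto_inv_atTop_zero.comp (tendsto_atTop_add_const_right _ _ tendsto_id))
  rw [add_zero] at h
  refine h.congr' ?_
  filter_upwards [eventually_gt_atTop 1] with a ha
  field_simp [(sub_pos.2 ha).ne']
  ring

lemma div_totPlus_div_prod_mem_Icc {x : ℝ} {n : ℕ} (h₁ : (primor n : ℝ) ≤ x)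
    (h₂ : x < primor (n + 1)) :
    x / totPlus x n / ∏ i ∈ Icc 1 n, ((p i : ℝ) / ((p i : ℝ) - 1)) ∈
      Set.Icc 1 ((p (n + 1) : ℝ) / ((p (n + 1) : ℝ) - 1)) := by
  have ha : (1 : ℝ) < p (n + 1) := by exact_mod_cast (two_le_p _)
  rw [div_totPlus_div_prod_eq]
  exact div_mem_Icc_div_sub_one ha (rPrime_mem_Icc h₁ h₂)

theorem stmt_14 (n' : ℝ → ℕ)
    (hn' : ∀ x : ℝ, 2 ≤ x → ((primor (n' x) : ℝ) ≤ x ∧ x < (primor (n' x + 1) : ℝ))) :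
    Tendsto (fun x : ℝ =>
        (x / ((1 + ((p (n' x + 1) : ℝ) - 2) *
            ((x - (primor (n' x) : ℝ)) / ((primor (n' x + 1) : ℝ) - (primor (n' x) : ℝ)))) *
          ∏ i ∈ Finset.Icc 1 (n' x), ((p i : ℝ) - 1))) /
        (∏ i ∈ Finset.Icc 1 (n' x), ((p i : ℝ) / ((p i : ℝ) - 1))))
      atTop (nhds 1) := by
  have hbounds : ∀ᶠ x in atTop, x / totPlus x (n' x) /
      ∏ i ∈ Icc 1 (n' x), ((p i : ℝ) / ((p i : ℝ) - 1)) ∈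
        Set.Icc 1 ((p (n' x + 1) : ℝ) / ((p (n' x + 1) : ℝ) - 1)) := by
    filter_upwards [eventually_ge_atTop 2] with x hx
    exact div_totPlus_div_prod_mem_Icc (hn' x hx).1 (hn' x hx).2
  have hn'_tendsto : Tendsto n' atTop atTop :=
    tendsto_atTop_of_lt_primor_succ <| (eventually_ge_atTop 2).mono fun x hx => (hn' x hx).2
  have hp_tendsto : Tendsto (fun x => (p (n' x + 1) : ℝ)) atTop atTop :=
    tendsto_natCast_atTop_atTop.comp (tendsto_p_succ_atTop.comp hn'_tendsto)
  exact tendsto_of_tendsto_of_tendsto_of_le_of_le' tendsto_const_nhds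
    (tendsto_div_sub_one_atTop.comp hp_tendsto) (hbounds.mono fun _ h => h.1)
    (hbounds.mono fun _ h => h.2)
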